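/- arXiv:1701.05128 — 4 statements merged into one kernel-verified Lean document; each statement's English description precedes it below -/
import Mathlib

section
/- Suppose β⋄ ∈ ℝᵖ and d⋄ = Xᵀ(y − Xβ⋄)/n satisfy βᵢ⋄ = H_λ(βᵢ⋄ + dᵢ⋄) for all i, and the least-squares problem restricted to A⋄ = supp(β⋄) is minimized by β⋄_{A⋄}. Then β⋄ is a local minimizer of L_λ(β) = (1/(2n))‖Xβ − y‖₂² + λ‖β‖₀: there is δ > 0 such that L_λ(β⋄ + h) ≥ L_λ(β⋄) for all h with ‖h‖_∞ < δ. -/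
/-!
The fixed-point equation forces, coordinatewise, either `βᵢ = 0` and `|dᵢ/n| < √(2λ)`, or
`dᵢ = 0` and `|βᵢ| ≥ √(2λ)`. Expanding the quadratic part around `β`, the change of the
criterion under a perturbation `h` is `‖Xh‖²/(2n)` plus a sum of coordinate terms
`-hᵢ dᵢ/n + λ([βᵢ + hᵢ ≠ 0] - [βᵢ ≠ 0])`. For `‖h‖_∞ < √(λ/2)` each of these is nonnegative:
on the support the linear term vanishes and `hᵢ` is too small to kill `βᵢ`; off it a new
nonzero coordinate costs `λ` while the linear term gains at most `√(λ/2) · √(2λ) = λ`.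
-/

open Matrix Finset

lemma hardThreshold_fixedPoint_cases {b g t : ℝ}
    (hfix : b = if |b + g| < t then 0 else b + g) :
    (b = 0 ∧ |g| < t) ∨ (g = 0 ∧ t ≤ |b|) := by
  split_ifs at hfix with hlt
  · subst hfix
    exact Or.inl ⟨rfl, by simpa using hlt⟩
  · obtain rfl : g = 0 := by linarith
    exact Or.inr ⟨rfl, by simpa using not_lt.mp hlt⟩

lemma mul_add_penalty_le_of_hardThreshold_fixedPoint {lam b g h : ℝ} (hlam : 0 < lam)
    (hfix : b = if |b + g| < √(2 * lam) then 0 else b + g) (hh : |h| < √(lam / 2)) :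
    h * g + lam * (if b ≠ 0 then 1 else 0) ≤ lam * (if b + h ≠ 0 then 1 else 0) := by
  rcases hardThreshold_fixedPoint_cases hfix with ⟨rfl, hg⟩ | ⟨rfl, hb⟩
  · rcases eq_or_ne h 0 with rfl | hh0
    · simp
    have hhg : |h * g| ≤ lam :=
      calc |h * g| = |h| * |g| := abs_mul h g
        _ ≤ √(lam / 2) * √(2 * lam) := mul_le_mul hh.le hg.le (abs_nonneg g) (Real.sqrt_nonneg _)
        _ = lam := by
          rw [← Real.sqrt_mul (by positivity), show lam / 2 * (2 * lam) = lam * lam by ring,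
            Real.sqrt_mul_self hlam.le]
    simpa [hh0] using (le_abs_self (h * g)).trans hhg
  · have hsqrt : √(lam / 2) < √(2 * lam) := Real.sqrt_lt_sqrt (by positivity) (by linarith)
    have hb0 : b ≠ 0 := by
      rintro rfl
      exact (Real.sqrt_pos.2 (by positivity : 0 < 2 * lam)).not_ge (by simpa using hb)
    have hbh : b + h ≠ 0 := by
      intro hbh
      rw [eq_neg_of_add_eq_zero_right hbh, abs_neg] at hh
      linarith
    simp [hb0, hbh]

lemma sum_sq_mulVec_add_sub {m k R : Type*} [Fintype m] [Fintype k] [CommRing R]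
    (X : Matrix m k R) (y : m → R) (b h : k → R) :
    ∑ i, ((X *ᵥ (b + h)) i - y i) ^ 2
      = ∑ i, ((X *ᵥ b) i - y i) ^ 2 - 2 * (h ⬝ᵥ Xᵀ *ᵥ (y - X *ᵥ b))
        + ∑ i, ((X *ᵥ h) i) ^ 2 := by
  rw [dotProduct_mulVec, vecMul_transpose, mulVec_add]
  simp only [dotProduct, Pi.add_apply, Pi.sub_apply, mul_sum, ← sum_sub_distrib,
    ← sum_add_distrib]
  exact sum_congr rfl fun i _ => by ring

theorem sdar_kkt_local_min_general {n p : ℕ}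
    (X : Matrix (Fin n) (Fin p) ℝ) (y : Fin n → ℝ)
    (lam : ℝ) (hlam : 0 < lam) (βd : Fin p → ℝ)
    (hfix : ∀ i : Fin p,
      βd i =
        (if |βd i + Xᵀ.mulVec (y - X.mulVec βd) i / (n : ℝ)| < Real.sqrt (2 * lam)
          then 0
          else βd i + Xᵀ.mulVec (y - X.mulVec βd) i / (n : ℝ))) :
    ∃ δ > 0, ∀ h : Fin p → ℝ, ‖h‖ < δ →
      (1 / (2 * (n : ℝ))) * ∑ i, (X.mulVec βd i - y i) ^ 2
          + lam * ((Finset.univ.filter fun i => βd i ≠ 0).card : ℝ)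
        ≤ (1 / (2 * (n : ℝ))) * ∑ i, (X.mulVec (βd + h) i - y i) ^ 2
          + lam * ((Finset.univ.filter fun i => (βd + h) i ≠ 0).card : ℝ) := by
  set d := Xᵀ *ᵥ (y - X *ᵥ βd)
  refine ⟨√(lam / 2), Real.sqrt_pos.2 (by positivity), fun h hh => ?_⟩
  have hcoord (i : Fin p) : |h i| < √(lam / 2) := (norm_le_pi_norm h i).trans_lt hh
  have hpenalty : ∑ i, h i * (d i / n) + lam * (#{i | βd i ≠ 0} : ℝ)
      ≤ lam * (#{i | (βd + h) i ≠ 0} : ℝ) := by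
    simp only [natCast_card_filter, mul_sum, ← sum_add_distrib, Pi.add_apply]
    exact sum_le_sum fun i _ =>
      mul_add_penalty_le_of_hardThreshold_fixedPoint hlam (hfix i) (hcoord i)
  have hlinear : ∑ i, h i * (d i / n) = 1 / (2 * (n : ℝ)) * (2 * (h ⬝ᵥ d)) := by
    simp only [dotProduct, mul_div_assoc', ← sum_div]
    ring
  have hquadratic : 0 ≤ 1 / (2 * (n : ℝ)) * ∑ i, ((X *ᵥ h) i) ^ 2 := by positivity
  rw [sum_sq_mulVec_add_sub]
  linarith

/-- A hard-thresholding fixed point which solves the least squares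
problem restricted to its support is a local minimizer of the ℓ₀-penalized
criterion. -/
theorem sdar_kkt_local_min {n p : ℕ} (hn : 0 < n)
    (X : Matrix (Fin n) (Fin p) ℝ) (y : Fin n → ℝ)
    (lam : ℝ) (hlam : 0 < lam) (βd : Fin p → ℝ)
    (hfix : ∀ i : Fin p,
      βd i =
        (if |βd i + Xᵀ.mulVec (y - X.mulVec βd) i / (n : ℝ)| < Real.sqrt (2 * lam)
          then 0
          else βd i + Xᵀ.mulVec (y - X.mulVec βd) i / (n : ℝ)))
    (hls : ∀ b : Fin p → ℝ, (∀ i, βd i = 0 → b i = 0) →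
      ∑ i, (X.mulVec βd i - y i) ^ 2 ≤ ∑ i, (X.mulVec b i - y i) ^ 2) :
    ∃ δ > 0, ∀ h : Fin p → ℝ, ‖h‖ < δ →
      (1 / (2 * (n : ℝ))) * ∑ i, (X.mulVec βd i - y i) ^ 2
          + lam * ((Finset.univ.filter fun i => βd i ≠ 0).card : ℝ)
        ≤ (1 / (2 * (n : ℝ))) * ∑ i, (X.mulVec (βd + h) i - y i) ^ 2
          + lam * ((Finset.univ.filter fun i => (βd + h) i ≠ 0).card : ℝ) :=
  sdar_kkt_local_min_general X y lam hlam βd hfix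
end

section
/- Let A, B be disjoint subsets of {1,…,p} with |A| = a, |B| = b, and suppose X satisfies the sparse Riesz condition of order a + b with constants c₋(a+b), c₊(a+b). Then the sparse orthogonality constant satisfies ‖X_Aᵀ X_B u‖₂/(n‖u‖₂) ≤ max(c₊(a+b) − 1, 1 − c₋(a+b)) for all nonzero u ∈ ℝ^{b}. -/
open Matrix Finset

noncomputable def extSOB {p : ℕ} (S : Finset (Fin p)) (x : S → ℝ) : Fin p → ℝ :=
  fun i => if h : i ∈ S then x ⟨i, h⟩ else 0

lemma extSOB_coe {p : ℕ} (S : Finset (Fin p)) (x : S → ℝ) (j : S) :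
    extSOB S x j = x j := by simp [extSOB]

lemma extSOB_notMem {p : ℕ} (S : Finset (Fin p)) (x : S → ℝ) {i : Fin p}
    (hi : i ∉ S) : extSOB S x i = 0 := by simp [extSOB, hi]

lemma sum_mul_extSOB {p : ℕ} (S : Finset (Fin p)) (x : S → ℝ) (f : Fin p → ℝ) :
    ∑ j : S, f j * x j = ∑ j ∈ S, f j * extSOB S x j := by
  rw [Finset.univ_eq_attach, ← Finset.sum_attach S (fun j => f j * extSOB S x j)]
  exact Finset.sum_congr rfl fun j _ => by rw [extSOB_coe]

lemma sum_ext_of_subset {p : ℕ} {S T : Finset (Fin p)} (hST : S ⊆ T)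
    (x : S → ℝ) (f : Fin p → ℝ) :
    ∑ j ∈ T, f j * extSOB S x j = ∑ j : S, f j * x j := by
  rw [sum_mul_extSOB]
  exact (Finset.sum_subset hST (fun i _ hi => by simp [extSOB_notMem S x hi])).symm

/-- For disjoint `A, B`, the sparse orthogonality constant of `X`
is bounded by `max(c₊(a+b) − 1, 1 − c₋(a+b))` under the SRC of order `a + b`. -/
theorem sparse_orthogonality_bound {n p : ℕ} (hn : 0 < n)
    (X : Matrix (Fin n) (Fin p) ℝ) (a b : ℕ) (cminus cplus : ℝ)
    (A B : Finset (Fin p)) (hAB : Disjoint A B)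
    (hA : A.card = a) (hB : B.card = b)
    (hSRC : ∀ (C : Finset (Fin p)), C.card ≤ a + b → ∀ u : C → ℝ,
      (n : ℝ) * cminus * (∑ i, u i ^ 2)
          ≤ ∑ i, ((X.submatrix id (Subtype.val : C → Fin p)).mulVec u i) ^ 2 ∧
      ∑ i, ((X.submatrix id (Subtype.val : C → Fin p)).mulVec u i) ^ 2
          ≤ (n : ℝ) * cplus * (∑ i, u i ^ 2)) :
    ∀ u : B → ℝ, u ≠ 0 →
      Real.sqrt (∑ i, (((X.submatrix id (Subtype.val : A → Fin p))ᵀ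
            * X.submatrix id (Subtype.val : B → Fin p)).mulVec u i) ^ 2)
          / ((n : ℝ) * Real.sqrt (∑ i, u i ^ 2))
        ≤ max (cplus - 1) (1 - cminus) := by
  intro u hu
  set XA := X.submatrix id (Subtype.val : A → Fin p) with hXAdef
  set XB := X.submatrix id (Subtype.val : B → Fin p) with hXBdef
  set C : Finset (Fin p) := A ∪ B with hCdef
  have hCcard : C.card ≤ a + b := by
    rw [hCdef, Finset.card_union_of_disjoint hAB, hA, hB]
  -- mulVec of the combined vector splits
  have hmv : ∀ (x : A → ℝ) (y : B → ℝ) (k : Fin n),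
      (X.submatrix id (Subtype.val : C → Fin p)).mulVec
        (fun j => extSOB A x j + extSOB B y j) k
        = XA.mulVec x k + XB.mulVec y k := by
    intro x y k
    simp only [Matrix.mulVec, dotProduct, Matrix.submatrix_apply, id_eq,
      hXAdef, hXBdef]
    have h1 : ∑ j : C, X k (j : Fin p) * (extSOB A x j + extSOB B y j)
        = ∑ j ∈ C, X k j * extSOB A x j + ∑ j ∈ C, X k j * extSOB B y j := by
      rw [← Finset.sum_add_distrib,
        ← Finset.sum_coe_sort C (fun j => X k j * extSOB A x j + X k j * extSOB B y j)]
      exact Finset.sum_congr rfl fun j _ => by ring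
    rw [h1, sum_ext_of_subset (Finset.subset_union_left) x (fun j => X k j),
      sum_ext_of_subset (Finset.subset_union_right) y (fun j => X k j)]
  -- norm of the combined vector splits (disjointness)
  have hnorm : ∀ (x : A → ℝ) (y : B → ℝ),
      ∑ j : C, (extSOB A x j + extSOB B y j) ^ 2
        = ∑ j : A, x j ^ 2 + ∑ j : B, y j ^ 2 := by
    intro x y
    have key : ∀ i : Fin p, (extSOB A x i + extSOB B y i) ^ 2
        = (extSOB A x i) * (extSOB A x i) + (extSOB B y i) * (extSOB B y i) := by
      intro i
      by_cases hiA : i ∈ A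
      · rw [extSOB_notMem B y (Finset.disjoint_left.mp hAB hiA)]; ring
      · rw [extSOB_notMem A x hiA]; ring
    have h1 : ∑ j : C, (extSOB A x j + extSOB B y j) ^ 2
        = ∑ j ∈ C, ((extSOB A x j) * (extSOB A x j)
            + (extSOB B y j) * (extSOB B y j)) := by
      rw [← Finset.sum_coe_sort C
        (fun j => (extSOB A x j) * (extSOB A x j) + (extSOB B y j) * (extSOB B y j))]
      exact Finset.sum_congr rfl fun j _ => key j
    rw [h1, Finset.sum_add_distrib,
      sum_ext_of_subset (Finset.subset_union_left) x (extSOB A x),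
      sum_ext_of_subset (Finset.subset_union_right) y (extSOB B y)]
    congr 1
    · exact Finset.sum_congr rfl fun j _ => by rw [extSOB_coe]; ring
    · exact Finset.sum_congr rfl fun j _ => by rw [extSOB_coe]; ring
  -- the bilinear cross term
  set R : (A → ℝ) → (B → ℝ) → ℝ :=
    fun x y => ∑ k, XA.mulVec x k * XB.mulVec y k with hRdef
  -- quadratic form expansion
  have hQ : ∀ (x : A → ℝ) (y : B → ℝ),
      ∑ k, ((X.submatrix id (Subtype.val : C → Fin p)).mulVec
          (fun j => extSOB A x j + extSOB B y j) k) ^ 2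
        = ∑ k, (XA.mulVec x k) ^ 2 + 2 * R x y + ∑ k, (XB.mulVec y k) ^ 2 := by
    intro x y
    have h1 : ∀ k, ((X.submatrix id (Subtype.val : C → Fin p)).mulVec
          (fun j => extSOB A x j + extSOB B y j) k) ^ 2
        = (XA.mulVec x k) ^ 2 + 2 * (XA.mulVec x k * XB.mulVec y k)
          + (XB.mulVec y k) ^ 2 := by
      intro k; rw [hmv x y k]; ring
    rw [Finset.sum_congr rfl fun k _ => h1 k, Finset.sum_add_distrib,
      Finset.sum_add_distrib, ← Finset.mul_sum, hRdef]
  -- the key bound on R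
  have hRb : ∀ (x : A → ℝ) (y : B → ℝ),
      R x y ≤ (n : ℝ) * (cplus - cminus) / 4 * (∑ j : A, x j ^ 2 + ∑ j : B, y j ^ 2) := by
    intro x y
    have h1 := (hSRC C hCcard (fun j => extSOB A x j + extSOB B y j)).2
    have h2 := (hSRC C hCcard (fun j => extSOB A x j + extSOB B (-y) j)).1
    rw [hQ x y, hnorm x y] at h1
    rw [hQ x (-y), hnorm x (-y)] at h2
    have hRneg : R x (-y) = - R x y := by
      simp only [hRdef, Matrix.mulVec_neg, Pi.neg_apply, mul_neg, Finset.sum_neg_distrib]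
    have hQBneg : ∑ k, (XB.mulVec (-y) k) ^ 2 = ∑ k, (XB.mulVec y k) ^ 2 := by
      simp [Matrix.mulVec_neg]
    have hYneg : ∑ j : B, (-y) j ^ 2 = ∑ j : B, y j ^ 2 := by simp
    rw [hRneg, hQBneg, hYneg] at h2
    linarith
  -- the target vector
  set v : A → ℝ := (XAᵀ * XB).mulVec u with hvdef
  have hPR : ∑ i, v i ^ 2 = R v u := by
    have h1 : ∑ i, v i ^ 2 = v ⬝ᵥ (XAᵀ * XB).mulVec u := by
      rw [hvdef]
      simp only [dotProduct]
      exact Finset.sum_congr rfl fun i _ => by ring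
    rw [h1, ← Matrix.mulVec_mulVec, Matrix.dotProduct_mulVec, Matrix.vecMul_transpose]
    simp only [dotProduct, hRdef]
  -- scaling of R
  have hRs : ∀ (s c : ℝ) (x : A → ℝ) (y : B → ℝ),
      R (s • x) (c • y) = s * c * R x y := by
    intro s c x y
    simp only [hRdef, Matrix.mulVec_smul, Pi.smul_apply, smul_eq_mul, Finset.mul_sum]
    exact Finset.sum_congr rfl fun k _ => by ring
  set U : ℝ := ∑ i, u i ^ 2 with hUdef
  set P : ℝ := ∑ i, v i ^ 2 with hPdef
  have hU : 0 < U := by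
    obtain ⟨i, hi⟩ : ∃ i, u i ≠ 0 := by
      by_contra h; push_neg at h; exact hu (funext h)
    calc (0:ℝ) < u i ^ 2 := by positivity
      _ ≤ U := Finset.single_le_sum (f := fun i => u i ^ 2)
          (fun j _ => sq_nonneg _) (Finset.mem_univ i)
  have hP0 : 0 ≤ P := Finset.sum_nonneg fun i _ => sq_nonneg _
  have hcc : cminus ≤ cplus := by
    have hBc : B.card ≤ a + b := by omega
    have h := hSRC B hBc u
    have h3 : (n : ℝ) * cminus * U ≤ (n : ℝ) * cplus * U := le_trans h.1 h.2
    have hn' : (0:ℝ) < n := by exact_mod_cast hn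
    nlinarith [mul_pos hn' hU]
  set δ : ℝ := max (cplus - 1) (1 - cminus) with hδdef
  have hδhalf : cplus - cminus ≤ 2 * δ := by
    have h1 := le_max_left (cplus - 1) (1 - cminus)
    have h2 := le_max_right (cplus - 1) (1 - cminus)
    rw [← hδdef] at h1 h2
    linarith
  have hδ0 : 0 ≤ δ := by
    have h1 := le_max_left (cplus - 1) (1 - cminus)
    have h2 := le_max_right (cplus - 1) (1 - cminus)
    rw [← hδdef] at h1 h2
    linarith
  have hn' : (0:ℝ) < n := by exact_mod_cast hn
  rcases eq_or_lt_of_le hP0 with hP | hP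
  · rw [← hP, Real.sqrt_zero, zero_div]; exact hδ0
  · -- main estimate : P ≤ n δ √P √U
    have hsP : 0 < Real.sqrt P := Real.sqrt_pos.mpr hP
    have hsU : 0 < Real.sqrt U := Real.sqrt_pos.mpr hU
    set s : ℝ := Real.sqrt (Real.sqrt U / Real.sqrt P) with hsdef
    have hs0 : 0 < s := Real.sqrt_pos.mpr (by positivity)
    have hs2 : s ^ 2 = Real.sqrt U / Real.sqrt P := Real.sq_sqrt (by positivity)
    have harg := hRb (s • v) (s⁻¹ • u)
    have hx2 : ∑ j : A, (s • v) j ^ 2 = s ^ 2 * P := by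
      simp only [Pi.smul_apply, smul_eq_mul, mul_pow, hPdef, ← Finset.mul_sum]
    have hy2 : ∑ j : B, (s⁻¹ • u) j ^ 2 = (s ^ 2)⁻¹ * U := by
      simp only [Pi.smul_apply, smul_eq_mul, mul_pow, hUdef, ← Finset.mul_sum, inv_pow]
    rw [hRs, hx2, hy2, hs2, mul_inv_cancel₀ hs0.ne', one_mul] at harg
    have hPsq : P = Real.sqrt P * Real.sqrt P := (Real.mul_self_sqrt hP0).symm
    have hUsq : U = Real.sqrt U * Real.sqrt U := (Real.mul_self_sqrt hU.le).symm
    have hxx : Real.sqrt U / Real.sqrt P * P = Real.sqrt U * Real.sqrt P := by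
      rw [div_mul_eq_mul_div, mul_div_assoc, Real.div_sqrt]
    have hyy : (Real.sqrt U / Real.sqrt P)⁻¹ * U = Real.sqrt P * Real.sqrt U := by
      rw [inv_div, div_mul_eq_mul_div, mul_div_assoc, Real.div_sqrt]
    rw [hxx, hyy, ← hPR] at harg
    -- harg : P ≤ n (c₊ - c₋)/4 * (√U √P + √P √U)
    have hPU : (0:ℝ) ≤ Real.sqrt P * Real.sqrt U := (mul_pos hsP hsU).le
    have h7 : (n:ℝ) * ((cplus - cminus)/2) ≤ (n:ℝ) * δ :=
      mul_le_mul_of_nonneg_left (by linarith) hn'.le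
    have key : P ≤ (n : ℝ) * δ * (Real.sqrt P * Real.sqrt U) := by
      calc P ≤ (n:ℝ) * (cplus - cminus) / 4
            * (Real.sqrt U * Real.sqrt P + Real.sqrt P * Real.sqrt U) := harg
        _ = ((n:ℝ) * ((cplus - cminus)/2)) * (Real.sqrt P * Real.sqrt U) := by ring
        _ ≤ ((n:ℝ) * δ) * (Real.sqrt P * Real.sqrt U) :=
            mul_le_mul_of_nonneg_right h7 hPU
        _ = (n:ℝ) * δ * (Real.sqrt P * Real.sqrt U) := by ring
    rw [div_le_iff₀ (by positivity)]
    have h5 : Real.sqrt P * Real.sqrt P ≤ (δ * ((n : ℝ) * Real.sqrt U)) * Real.sqrt P := by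
      calc Real.sqrt P * Real.sqrt P = P := hPsq.symm
        _ ≤ (n:ℝ) * δ * (Real.sqrt P * Real.sqrt U) := key
        _ = (δ * ((n : ℝ) * Real.sqrt U)) * Real.sqrt P := by ring
    exact le_of_mul_le_mul_right h5 hsP
end

section
/- Suppose X satisfies the sparse Riesz condition of order J with upper bound c₊(J), i.e., ‖X_A u‖₂² ≤ n c₊(J)‖u‖₂² whenever |A| ≤ J. Then for every β ∈ ℝᵖ, ‖Xβ‖₂ ≤ √(n c₊(J)) (‖β‖₂ + ‖β‖₁/√J). -/
open Matrix Finset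

/-!
Split `β` into blocks `A₁, A₂, …` of `J` coordinates each, in decreasing order of `|βᵢ|`.
Every block is `J`-sparse, so the sparse Riesz bound controls `X` on it. Every entry of
`A_{k+1}` is at most the mean `‖β_{A_k}‖₁ / J` of the previous block, so
`‖β_{A_{k+1}}‖₂ ≤ ‖β_{A_k}‖₁ / √J`. The triangle inequality over the blocks then gives
`‖Xβ‖₂ ≤ √(n c₊) (‖β_{A₁}‖₂ + ‖β‖₁ / √J)`.
-/

theorem Finset.exists_subset_card_eq_forall_le {α β : Type*} [DecidableEq α] [LinearOrder β]
    (f : α → β) {s : Finset α} {k : ℕ} (hk : k ≤ #s) :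
    ∃ t ⊆ s, #t = k ∧ ∀ i ∈ t, ∀ j ∈ s \ t, f j ≤ f i := by
  induction k with
  | zero => exact ⟨∅, empty_subset s, rfl, by simp⟩
  | succ k ih =>
    obtain ⟨t, hts, rfl, htop⟩ := ih (Nat.le_of_succ_le hk)
    obtain ⟨m, hm, hmax⟩ := exists_max_image (s \ t) f <| by
      rw [← card_pos, card_sdiff_of_subset hts]; omega
    have hmt : m ∉ t := (mem_sdiff.1 hm).2
    refine ⟨insert m t, insert_subset (mem_sdiff.1 hm).1 hts, card_insert_of_notMem hmt, ?_⟩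
    intro i hi j hj
    rw [sdiff_insert] at hj
    rcases mem_insert.1 hi with rfl | hi
    · exact hmax j (mem_of_mem_erase hj)
    · exact htop i hi j (mem_of_mem_erase hj)

theorem exists_subset_card_eq_mul_abs_le_sum {ι : Type*} [DecidableEq ι] (β : ι → ℝ)
    {S : Finset ι} {J : ℕ} (hJ : J ≤ #S) :
    ∃ A ⊆ S, #A = J ∧ ∀ i ∈ S \ A, J * |β i| ≤ ∑ j ∈ A, |β j| := by
  obtain ⟨A, hAS, hA, htop⟩ := exists_subset_card_eq_forall_le (fun i ↦ |β i|) hJ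
  refine ⟨A, hAS, hA, fun i hi ↦ ?_⟩
  simpa [hA] using card_nsmul_le_sum A _ _ fun j hj ↦ htop j hj i hi

theorem sqrt_sum_sq_le_div_sqrt {ι : Type*} {u : ι → ℝ} {B : Finset ι} {J : ℕ} (hJ : 0 < J)
    (hB : #B ≤ J) {x : ℝ} (hx : 0 ≤ x) (hu : ∀ i ∈ B, J * |u i| ≤ x) :
    √(∑ i ∈ B, u i ^ 2) ≤ x / √J := by
  have hJ' : (0 : ℝ) < J := Nat.cast_pos.2 hJ
  rw [Real.sqrt_le_left (by positivity), div_pow, Real.sq_sqrt hJ'.le]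
  calc ∑ i ∈ B, u i ^ 2 ≤ ∑ _i ∈ B, (x / J) ^ 2 := by
        refine sum_le_sum fun i hi ↦ ?_
        rw [← sq_abs]
        gcongr
        rw [le_div_iff₀' hJ']
        exact hu i hi
    _ ≤ J * (x / J) ^ 2 := by
        rw [sum_const, nsmul_eq_mul]
        gcongr
    _ = x ^ 2 / J := by field_simp

variable {ι E : Type*} [Fintype ι] [DecidableEq ι] [SeminormedAddCommGroup E]

/-- The upper half of the sparse Riesz condition of order `J`, with `C = √(n c₊(J))`. -/
def SparseRieszUpperBound (f : (ι → ℝ) →+ E) (J : ℕ) (C : ℝ) : Prop :=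
  ∀ A : Finset ι, #A ≤ J → ∀ u : ι → ℝ, (∀ i ∉ A, u i = 0) → ‖f u‖ ≤ C * √(∑ i, u i ^ 2)

namespace SparseRieszUpperBound

variable {f : (ι → ℝ) →+ E} {J : ℕ} {C : ℝ}

/-- `A` is the first block `A₁`; keeping it in the conclusion is what lets the induction
pass the bound `‖β_{A₂}‖₂ ≤ ‖β_{A₁}‖₁ / √J` from one block to the next. -/
theorem exists_card_le_and_norm_le (hf : SparseRieszUpperBound f J C) (hJ : 0 < J)
    (hC : 0 ≤ C) (S : Finset ι) (β : ι → ℝ) (hβ : ∀ i ∉ S, β i = 0) :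
    ∃ A : Finset ι, #A ≤ J ∧
      ‖f β‖ ≤ C * (√(∑ i ∈ A, β i ^ 2) + (∑ i, |β i|) / √J) := by
  induction S using Finset.strongInduction generalizing β with
  | H S ih =>
  by_cases hS : #S ≤ J
  · refine ⟨S, hS, ?_⟩
    calc ‖f β‖ ≤ C * √(∑ i, β i ^ 2) := hf S hS β hβ
      _ = C * √(∑ i ∈ S, β i ^ 2) := by
          rw [sum_subset (subset_univ S) fun i _ hi ↦ by simp [hβ i hi]]
      _ ≤ _ := by gcongr; exact le_add_of_nonneg_right (by positivity)
  obtain ⟨A, hAS, hAJ, hAtop⟩ := exists_subset_card_eq_mul_abs_le_sum β (not_le.1 hS).le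
  set head := (A : Set ι).indicator β
  set tail := (A : Set ι)ᶜ.indicator β
  have hsplit : head + tail = β := Set.indicator_self_add_compl _ _
  have htail_supp : ∀ i ∉ S \ A, tail i = 0 := fun i hi ↦ by
    by_cases hiA : i ∈ A
    · simp [tail, hiA]
    · simp [tail, hiA, hβ i (by simp_all)]
  obtain ⟨B, hBJ, htail⟩ :=
    ih (S \ A) (sdiff_ssubset hAS (card_pos.1 (hAJ ▸ hJ))) tail htail_supp
  have hhead : ‖f head‖ ≤ C * √(∑ i ∈ A, β i ^ 2) := by
    have := hf A hAJ.le head fun i hi ↦ Set.indicator_of_notMem (by simpa using hi) β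
    simpa [head, Set.indicator_apply, sum_ite_mem] using this
  have htailB : √(∑ i ∈ B, tail i ^ 2) ≤ (∑ i ∈ A, |β i|) / √J := by
    refine sqrt_sum_sq_le_div_sqrt hJ hBJ (by positivity) fun i _ ↦ ?_
    by_cases hi : i ∈ S \ A
    · simpa [tail, (mem_sdiff.1 hi).2] using hAtop i hi
    · simp only [htail_supp i hi, abs_zero, mul_zero]
      positivity
  have hl1 : ∑ i ∈ A, |β i| + ∑ i, |tail i| = ∑ i, |β i| := by
    have htail_l1 : ∑ i, |tail i| = ∑ i ∈ Aᶜ, |β i| := by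
      rw [← sum_indicator_subset (fun i ↦ |β i|) (subset_univ Aᶜ)]
      refine sum_congr rfl fun i _ ↦ ?_
      by_cases hi : i ∈ A <;> simp [tail, hi]
    rw [htail_l1, sum_add_sum_compl]
  refine ⟨A, hAJ.le, ?_⟩
  calc ‖f β‖ = ‖f head + f tail‖ := by rw [← map_add, hsplit]
    _ ≤ ‖f head‖ + ‖f tail‖ := norm_add_le _ _
    _ ≤ C * √(∑ i ∈ A, β i ^ 2) + C * ((∑ i ∈ A, |β i|) / √J + (∑ i, |tail i|) / √J) := by
        gcongr
        exact htail.trans (by gcongr)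
    _ = _ := by rw [← hl1, add_div]; ring

theorem norm_le (hf : SparseRieszUpperBound f J C) (hJ : 0 < J) (hC : 0 ≤ C) (β : ι → ℝ) :
    ‖f β‖ ≤ C * (√(∑ i, β i ^ 2) + (∑ i, |β i|) / √J) := by
  obtain ⟨A, -, hA⟩ := hf.exists_card_le_and_norm_le hJ hC univ β (by simp)
  refine hA.trans ?_
  gcongr
  exact subset_univ A

end SparseRieszUpperBound

theorem src_full_vector_upper_bound_general {n p : ℕ}
    (X : Matrix (Fin n) (Fin p) ℝ) (J : ℕ) (hJ : 0 < J) (cplus : ℝ)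
    (hSRC : ∀ A : Finset (Fin p), A.card ≤ J → ∀ u : Fin p → ℝ,
      (∀ i ∉ A, u i = 0) →
      ∑ i, (X.mulVec u i) ^ 2 ≤ (n : ℝ) * cplus * ∑ i, u i ^ 2) :
    ∀ β : Fin p → ℝ,
      Real.sqrt (∑ i, (X.mulVec β i) ^ 2)
        ≤ Real.sqrt ((n : ℝ) * cplus) *
            (Real.sqrt (∑ i, β i ^ 2) + (∑ i, |β i|) / Real.sqrt (J : ℝ)) := by
  let f : (Fin p → ℝ) →+ EuclideanSpace ℝ (Fin n) :=
    AddMonoidHom.mk' (fun u ↦ WithLp.toLp 2 (X *ᵥ u)) fun u v ↦ by simp [mulVec_add]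
  have hf : SparseRieszUpperBound f J √(n * cplus) := fun A hA u hu ↦ by
    have hu2 : 0 ≤ ∑ i, u i ^ 2 := by positivity
    simpa [f, EuclideanSpace.norm_eq, Real.sqrt_mul' _ hu2]
      using Real.sqrt_le_sqrt (hSRC A hA u hu)
  intro β
  simpa [f, EuclideanSpace.norm_eq] using hf.norm_le hJ (Real.sqrt_nonneg _) β

/-- Under the SRC upper bound of order `J`,
`‖Xβ‖₂ ≤ √(n c₊(J)) (‖β‖₂ + ‖β‖₁/√J)` for every `β`. -/
theorem src_full_vector_upper_bound {n p : ℕ} (hn : 0 < n)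
    (X : Matrix (Fin n) (Fin p) ℝ) (J : ℕ) (hJ : 0 < J) (cplus : ℝ)
    (hSRC : ∀ A : Finset (Fin p), A.card ≤ J → ∀ u : Fin p → ℝ,
      (∀ i ∉ A, u i = 0) →
      ∑ i, (X.mulVec u i) ^ 2 ≤ (n : ℝ) * cplus * ∑ i, u i ^ 2) :
    ∀ β : Fin p → ℝ,
      Real.sqrt (∑ i, (X.mulVec β i) ^ 2)
        ≤ Real.sqrt ((n : ℝ) * cplus) *
            (Real.sqrt (∑ i, β i ^ 2) + (∑ i, |β i|) / Real.sqrt (J : ℝ)) :=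
  src_full_vector_upper_bound_general X J hJ cplus hSRC
end

section
/- Under (A1) and the mutual coherence condition (T−1)μ < 1, the SDAR least-squares update satisfies ‖β^{k+1} − β̃‖_∞ ≤ ((1+μ)/(1−(T−1)μ))·‖β̃|_{A*_J\Aᵏ}‖_∞ + h_∞(T)/(1−(T−1)μ), where h_∞(T) = max_{|A|≤T} ‖X_Aᵀη̃‖_∞/n. -/
open Matrix Finset

/-!
Write `δ = β^{k+1} - β̃` and `r = β̃|_{A*_J \ Aᵏ}`, so that `δ = -r` off `Aᵏ`. By the normal
equations the restriction `u = δ + r` of `δ` to `Aᵏ` satisfies `(XᵀX u)_i = (Xᵀη̃)_i + (XᵀX r)_i`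
for `i ∈ Aᵏ`, whose size is at most `n h + T n μ ‖r‖_∞`. On `Aᵏ` the Gram matrix has diagonal `n`
and off-diagonal entries at most `nμ`, so at a coordinate `i₀` where `|u|` is maximal
`n |u_{i₀}| ≤ n h + T n μ ‖r‖_∞ + (T - 1) n μ |u_{i₀}|`. Hence
`‖u‖_∞ ≤ (h + Tμ ‖r‖_∞) / (1 - (T - 1)μ)`, and `Tμ < 1 + μ`.
-/

theorem Matrix.mulVec_apply_eq_sum_of_support_subset {m ι R : Type*} [Fintype ι]
    [NonUnitalNonAssocSemiring R] (G : Matrix m ι R) {s : Finset ι} {v : ι → R}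
    (hv : ∀ j ∉ s, v j = 0) (i : m) :
    (G *ᵥ v) i = ∑ j ∈ s, G i j * v j :=
  (sum_subset (subset_univ s) fun j _ hj => by rw [hv j hj, mul_zero]).symm

theorem Finset.abs_sum_mul_le_card_mul {ι R : Type*} [CommRing R] [LinearOrder R]
    [IsStrictOrderedRing R] (s : Finset ι) {f g : ι → R} {a b : R}
    (hf : ∀ i ∈ s, |f i| ≤ a) (hg : ∀ i ∈ s, |g i| ≤ b) :
    |∑ i ∈ s, f i * g i| ≤ #s * (a * b) :=
  calc |∑ i ∈ s, f i * g i| ≤ ∑ i ∈ s, |f i * g i| := abs_sum_le_sum_abs _ _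
    _ ≤ ∑ _i ∈ s, a * b := sum_le_sum fun i hi => by
        rw [abs_mul]
        exact mul_le_mul (hf i hi) (hg i hi) (abs_nonneg _) ((abs_nonneg _).trans (hf i hi))
    _ = #s * (a * b) := by rw [sum_const, nsmul_eq_mul]

section DiagonalDominance

variable {𝕜 : Type*} [Field 𝕜] [LinearOrder 𝕜] [IsStrictOrderedRing 𝕜]

/-- This replaces the bound `‖(X_AᵀX_A)⁻¹ w‖_∞ ≤ ‖w‖_∞ / (n (1 - (#A - 1) μ))`. -/
theorem Matrix.abs_le_div_of_diag_dominant {ι : Type*} [Fintype ι] [DecidableEq ι]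
    {G : Matrix ι ι 𝕜} {s : Finset ι} {u : ι → 𝕜} {d μ c : 𝕜} (hd : 0 < d)
    (hdiag : ∀ i ∈ s, G i i = d) (hoff : ∀ i ∈ s, ∀ j ∈ s, i ≠ j → |G i j| ≤ d * μ)
    (hdom : ((#s : 𝕜) - 1) * μ < 1) (hu : ∀ i ∉ s, u i = 0)
    (hGu : ∀ i ∈ s, |(G *ᵥ u) i| ≤ d * c) {i : ι} (hi : i ∈ s) :
    |u i| ≤ c / (1 - (#s - 1) * μ) := by
  obtain ⟨i₀, hi₀, hmax⟩ := s.exists_max_image (fun j => |u j|) ⟨i, hi⟩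
  set S := ∑ j ∈ s.erase i₀, G i₀ j * u j
  have hrow : (G *ᵥ u) i₀ = d * u i₀ + S := by
    rw [G.mulVec_apply_eq_sum_of_support_subset hu, ← add_sum_erase s _ hi₀, hdiag i₀ hi₀]
  have hS : |S| ≤ (#s - 1) * (d * μ * |u i₀|) := by
    have := (s.erase i₀).abs_sum_mul_le_card_mul
      (fun j hj => hoff i₀ hi₀ j (mem_of_mem_erase hj) (ne_of_mem_erase hj).symm)
      (fun j hj => hmax j (mem_of_mem_erase hj))
    rwa [card_erase_of_mem hi₀, Nat.cast_sub (card_pos.2 ⟨i, hi⟩), Nat.cast_one] at this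
  have hmain : d * |u i₀| ≤ d * c + (#s - 1) * (d * μ * |u i₀|) :=
    calc d * |u i₀| = |(G *ᵥ u) i₀ - S| := by
          rw [hrow, add_sub_cancel_right, abs_mul, abs_of_pos hd]
      _ ≤ |(G *ᵥ u) i₀| + |S| := abs_sub _ _
      _ ≤ d * c + (#s - 1) * (d * μ * |u i₀|) := add_le_add (hGu i₀ hi₀) hS
  calc |u i| ≤ |u i₀| := hmax i hi
    _ ≤ c / (1 - (#s - 1) * μ) := by
        rw [le_div_iff₀ (sub_pos.2 hdom)]
        refine le_of_mul_le_mul_left ?_ hd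
        linarith

theorem Matrix.abs_le_div_of_diag_dominant_of_eq_neg_off {ι : Type*} [Fintype ι]
    [DecidableEq ι] {G : Matrix ι ι 𝕜} {s t : Finset ι} {δ r : ι → 𝕜} {d μ b c : 𝕜}
    (hd : 0 < d) (hdiag : ∀ i ∈ s, G i i = d) (hoff : ∀ i ∈ s, ∀ j, i ≠ j → |G i j| ≤ d * μ)
    (hdom : ((#s : 𝕜) - 1) * μ < 1) (hst : Disjoint s t) (hδ : ∀ i ∉ s, δ i = -r i)
    (hr : ∀ i ∉ t, r i = 0) (hrb : ∀ j ∈ t, |r j| ≤ b) (hGδ : ∀ i ∈ s, |(G *ᵥ δ) i| ≤ d * c)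
    {i : ι} (hi : i ∈ s) :
    |δ i| ≤ (c + #t * μ * b) / (1 - (#s - 1) * μ) := by
  have hri : ∀ i ∈ s, r i = 0 := fun i hi => hr i (disjoint_left.1 hst hi)
  have hu : ∀ i ∉ s, (δ + r) i = 0 := fun i hi => by
    rw [Pi.add_apply, hδ i hi, neg_add_cancel]
  have hGr : ∀ i ∈ s, |(G *ᵥ r) i| ≤ #t * (d * μ * b) := fun i hi => by
    rw [G.mulVec_apply_eq_sum_of_support_subset hr]
    exact t.abs_sum_mul_le_card_mul
      (fun j hj => hoff i hi j fun hij => disjoint_left.1 hst hi (hij ▸ hj)) hrb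
  have hGu : ∀ i ∈ s, |(G *ᵥ (δ + r)) i| ≤ d * (c + #t * μ * b) := fun i hi => by
    rw [mulVec_add, Pi.add_apply]
    calc _ ≤ |(G *ᵥ δ) i| + |(G *ᵥ r) i| := abs_add_le _ _
      _ ≤ d * c + #t * (d * μ * b) := add_le_add (hGδ i hi) (hGr i hi)
      _ = d * (c + #t * μ * b) := by ring
  simpa only [Pi.add_apply, hri i hi, add_zero] using
    abs_le_div_of_diag_dominant hd hdiag (fun i hi j _ hij => hoff i hi j hij) hdom hu hGu hi

end DiagonalDominance

theorem Matrix.transpose_mul_self_mulVec_sub_apply_of_normal_eq {m ι R : Type*} [Fintype m]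
    [Fintype ι] [CommRing R] {X : Matrix m ι R} {β β' : ι → R} {η y : m → R}
    (hy : y = X *ᵥ β' + η) {i : ι} (hi : (Xᵀ *ᵥ (X *ᵥ β - y)) i = 0) :
    ((Xᵀ * X) *ᵥ (β - β')) i = (Xᵀ *ᵥ η) i := by
  rw [hy, ← sub_sub, ← mulVec_sub, mulVec_sub, Pi.sub_apply, sub_eq_zero] at hi
  rwa [← mulVec_mulVec]

theorem Matrix.transpose_mul_self_apply_self {m ι R : Type*} [Fintype m] [CommSemiring R]
    (X : Matrix m ι R) (j : ι) : (Xᵀ * X) j j = ∑ i, X i j ^ 2 := by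
  simp only [mul_apply, transpose_apply, sq]

theorem abs_sub_le_of_normal_eq_of_coherence {m ι : Type*} [Fintype m] [Fintype ι]
    [DecidableEq ι] {X : Matrix m ι ℝ} {n μ h b : ℝ} (hn : 0 < n)
    (hnorm : ∀ j, ∑ i, X i j ^ 2 = n) (hμ : ∀ i j, i ≠ j → |(Xᵀ * X) i j| ≤ n * μ)
    {A t : Finset ι} (hdom : ((#A : ℝ) - 1) * μ < 1) (hAt : Disjoint A t)
    {β β' r : ι → ℝ} {η y : m → ℝ} (hy : y = X *ᵥ β' + η) (hoff : ∀ i ∉ A, β i - β' i = -r i)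
    (hr : ∀ i ∉ t, r i = 0) (hrb : ∀ j ∈ t, |r j| ≤ b) (hη : ∀ i ∈ A, |(Xᵀ *ᵥ η) i| ≤ n * h)
    (hls : ∀ i ∈ A, (Xᵀ *ᵥ (X *ᵥ β - y)) i = 0) {i : ι} (hi : i ∈ A) :
    |β i - β' i| ≤ (h + #t * μ * b) / (1 - (#A - 1) * μ) :=
  abs_le_div_of_diag_dominant_of_eq_neg_off (δ := β - β') hn
    (fun j _ => (X.transpose_mul_self_apply_self j).trans (hnorm j)) (fun j _ => hμ j) hdom hAt
    hoff hr hrb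
    (fun j hj => transpose_mul_self_mulVec_sub_apply_of_normal_eq hy (hls j hj) ▸ hη j hj) hi

/-- Lemma 5(ii) of the SDAR paper: under (A1) and the mutual
coherence condition `(T−1)μ < 1`, the SDAR least-squares update satisfies
`‖β^{k+1} − β̃‖_∞ ≤ ((1+μ)/(1−(T−1)μ)) ‖β̃|_{A*_J \ Aᵏ}‖_∞ + h_∞(T)/(1−(T−1)μ)`. -/
theorem sdar_ls_update_sup_norm_bound {n p : ℕ} (hn : 0 < n)
    (X : Matrix (Fin n) (Fin p) ℝ)
    (T J : ℕ) (hJT : J ≤ T) (hT : 1 ≤ T)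
    (Astar : Finset (Fin p)) (hAstar : Astar.card = J)
    (βt : Fin p → ℝ) (η : Fin n → ℝ) (y : Fin n → ℝ)
    (hβtsupp : ∀ i ∉ Astar, βt i = 0)
    (hy : y = X.mulVec βt + η)
    (μ : ℝ) (hμ0 : 0 ≤ μ)
    (hnorm : ∀ j : Fin p, ∑ i, (X i j) ^ 2 = (n : ℝ))
    (hμ : ∀ i j : Fin p, i ≠ j → |(Xᵀ * X) i j| ≤ (n : ℝ) * μ)
    (hcoh : ((T : ℝ) - 1) * μ < 1)
    (h : ℝ)
    -- h bounds h_∞(T) = max_{|A|≤T} ‖X_Aᵀ η‖_∞ / n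
    (hh : ∀ A : Finset (Fin p), A.card ≤ T → ∀ i ∈ A,
      |Xᵀ.mulVec η i| / (n : ℝ) ≤ h)
    (Ak : Finset (Fin p)) (hAk : Ak.card = T)
    (βk1 : Fin p → ℝ)
    (hβk1supp : ∀ i ∉ Ak, βk1 i = 0)
    -- normal equations for least squares on Ak
    (hβk1ls : ∀ i ∈ Ak, Xᵀ.mulVec (X.mulVec βk1 - y) i = 0) :
    ‖(fun i => βk1 i - βt i)‖
      ≤ ((1 + μ) / (1 - ((T : ℝ) - 1) * μ)) *
          ‖(fun i => if i ∈ Astar \ Ak then βt i else 0)‖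
        + h / (1 - ((T : ℝ) - 1) * μ) := by
  set D := 1 - ((T : ℝ) - 1) * μ
  set r : Fin p → ℝ := fun i => if i ∈ Astar \ Ak then βt i else 0
  have hn' : (0 : ℝ) < n := Nat.cast_pos.2 hn
  have hD : 0 < D := sub_pos.2 hcoh
  have hr : ∀ i, |r i| ≤ ‖r‖ := fun i => by
    simpa only [Real.norm_eq_abs] using norm_le_pi_norm r i
  obtain ⟨i₁, hi₁⟩ : Ak.Nonempty := card_pos.1 (hAk ▸ hT)
  have hh0 : 0 ≤ h := (div_nonneg (abs_nonneg _) hn'.le).trans (hh Ak hAk.le i₁ hi₁)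
  have hδ_off : ∀ i ∉ Ak, βk1 i - βt i = -r i := fun i hi => by
    by_cases hs : i ∈ Astar <;> simp [r, hi, hs, hβk1supp i hi, hβtsupp]
  have hr_le : ‖r‖ ≤ (1 + μ) / D * ‖r‖ + h / D := by
    have : 1 ≤ (1 + μ) / D := (one_le_div hD).2 (by nlinarith)
    exact le_add_of_le_of_nonneg (le_mul_of_one_le_left (norm_nonneg r) this)
      (div_nonneg hh0 hD.le)
  refine (pi_norm_le_iff_of_nonneg ((norm_nonneg r).trans hr_le)).2 fun i => ?_
  rw [Real.norm_eq_abs]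
  by_cases hi : i ∈ Ak
  · have ht : (#(Astar \ Ak) : ℝ) ≤ T :=
      mod_cast (card_le_card sdiff_subset).trans (hAstar ▸ hJT)
    have hact := abs_sub_le_of_normal_eq_of_coherence hn' hnorm hμ (by rwa [hAk])
      sdiff_disjoint.symm hy hδ_off (fun i hi => if_neg hi) (fun j _ => hr j)
      (fun i hi => (div_le_iff₀' hn').1 (hh Ak hAk.le i hi)) hβk1ls hi
    rw [hAk] at hact
    calc |βk1 i - βt i| ≤ (h + #(Astar \ Ak) * μ * ‖r‖) / D := hact
      _ ≤ (h + (1 + μ) * ‖r‖) / D := by gcongr; nlinarith [norm_nonneg r]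
      _ = _ := by ring
  · rw [hδ_off i hi, abs_neg]
    exact (hr i).trans hr_le
end
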